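/- As ε → 0⁺, the optimal value of the entropy-regularized optimal transport problem ℓ^{OT_ε} = min_{π ∈ U(a,w)} ⟨C, π⟩ + ε ∑_{i,k} π_{ik}(log π_{ik} − 1) converges to the unregularized optimal transport value ℓ^{OT} = min_{π ∈ U(a,w)} ⟨C, π⟩. -/
import Mathlib


open Finset Filter

lemma entlb {x : ℝ} (h0 : 0 ≤ x) (h1 : x ≤ 1) : -2 ≤ x * (Real.log x - 1) := by
  rcases eq_or_lt_of_le h0 with h | h
  · rw [← h]; norm_num
  · have hlog : 1 - x⁻¹ ≤ Real.log x := by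
      have := Real.log_le_sub_one_of_pos (inv_pos.mpr h)
      rw [Real.log_inv] at this; linarith
    have hx : x * x⁻¹ = 1 := mul_inv_cancel₀ h.ne'
    nlinarith

lemma entub {x : ℝ} (h0 : 0 ≤ x) (h1 : x ≤ 1) : x * (Real.log x - 1) ≤ 0 := by
  have hlog : Real.log x ≤ 0 := Real.log_nonpos h0 h1
  nlinarith

/-- As ε → 0⁺, the entropy-regularized OT value converges to the
unregularized OT value. -/
theorem stmt2 (n K : ℕ) (hn : 0 < n) (C : Fin n → Fin K → ℝ)
    (w : Fin K → ℝ) (hw : ∀ k, 0 < w k) (hw1 : ∑ k, w k = 1)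
    (U : Set (Fin n → Fin K → ℝ))
    (hU : U = {π | (∀ i k, 0 ≤ π i k) ∧ (∀ i, ∑ k, π i k = 1 / (n : ℝ)) ∧
      ∀ k, ∑ i, π i k = w k}) :
    Tendsto
      (fun ε : ℝ => sInf ((fun π : Fin n → Fin K → ℝ => ∑ i, ∑ k,
        (C i k * π i k + ε * (π i k * (Real.log (π i k) - 1)))) '' U))
      (nhdsWithin 0 (Set.Ioi 0))
      (nhds (sInf ((fun π : Fin n → Fin K → ℝ =>
        ∑ i, ∑ k, C i k * π i k) '' U))) := by
  have hn' : (0:ℝ) < n := by exact_mod_cast hn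
  have hn1 : (1:ℝ) ≤ n := by exact_mod_cast hn
  -- entries of any π ∈ U lie in [0,1]
  have hbd : ∀ π ∈ U, ∀ i k, 0 ≤ π i k ∧ π i k ≤ 1 := by
    intro π hπ i k
    rw [hU] at hπ
    obtain ⟨h1, h2, _⟩ := hπ
    refine ⟨h1 i k, ?_⟩
    calc π i k ≤ ∑ k', π i k' := Finset.single_le_sum (fun j _ => h1 i j) (mem_univ k)
    _ = 1 / n := h2 i
    _ ≤ 1 := by rw [div_le_one hn']; exact hn1
  -- U is nonempty
  have hUne : U.Nonempty := by
    refine ⟨fun _ k => w k / n, ?_⟩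
    rw [hU]
    refine ⟨fun i k => div_nonneg (hw k).le hn'.le, fun i => ?_, fun k => ?_⟩
    · rw [← Finset.sum_div, hw1]
    · rw [Finset.sum_const, card_univ, Fintype.card_fin, nsmul_eq_mul]
      field_simp
  -- notation
  set g0 : (Fin n → Fin K → ℝ) → ℝ := fun π => ∑ i, ∑ k, C i k * π i k with hg0
  set L : ℝ := sInf (g0 '' U) with hL
  set B : ℝ := ∑ i : Fin n, ∑ k : Fin K, |C i k| with hB
  -- splitting the regularized objective
  have hsplit : ∀ (ε : ℝ) (π : Fin n → Fin K → ℝ),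
      (∑ i, ∑ k, (C i k * π i k + ε * (π i k * (Real.log (π i k) - 1))))
      = g0 π + ε * ∑ i, ∑ k, π i k * (Real.log (π i k) - 1) := by
    intro ε π
    rw [hg0]
    simp only [Finset.mul_sum, ← Finset.sum_add_distrib]
  -- bounds on the entropy term
  have hHlb : ∀ π ∈ U, -(2*(n:ℝ)*K) ≤ ∑ i, ∑ k, π i k * (Real.log (π i k) - 1) := by
    intro π hπ
    calc -(2*(n:ℝ)*K) = ∑ _i : Fin n, ∑ _k : Fin K, (-2 : ℝ) := by
          simp [Finset.sum_const]; ring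
    _ ≤ _ := Finset.sum_le_sum (fun i _ => Finset.sum_le_sum
        (fun k _ => entlb (hbd π hπ i k).1 (hbd π hπ i k).2))
  have hHub : ∀ π ∈ U, ∑ i, ∑ k, π i k * (Real.log (π i k) - 1) ≤ 0 := by
    intro π hπ
    apply Finset.sum_nonpos
    intro i _
    exact Finset.sum_nonpos (fun k _ => entub (hbd π hπ i k).1 (hbd π hπ i k).2)
  -- lower bound for g0
  have hg0lb : ∀ π ∈ U, -B ≤ g0 π := by
    intro π hπ
    rw [hg0, hB]
    have : -(∑ i : Fin n, ∑ k : Fin K, |C i k|) = ∑ i : Fin n, ∑ k : Fin K, -|C i k| := by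
      simp
    rw [this]
    apply Finset.sum_le_sum
    intro i _
    apply Finset.sum_le_sum
    intro k _
    have h := hbd π hπ i k
    nlinarith [le_abs_self (C i k), neg_abs_le (C i k), h.1, h.2]
  -- bdd below facts
  have hbdd0 : BddBelow (g0 '' U) := by
    refine ⟨-B, ?_⟩
    rintro _ ⟨π, hπ, rfl⟩
    exact hg0lb π hπ
  have hbdd : ∀ ε : ℝ, 0 ≤ ε → BddBelow ((fun π : Fin n → Fin K → ℝ => ∑ i, ∑ k,
      (C i k * π i k + ε * (π i k * (Real.log (π i k) - 1)))) '' U) := by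
    intro ε hε
    refine ⟨-B - ε * (2*(n:ℝ)*K), ?_⟩
    rintro _ ⟨π, hπ, rfl⟩
    simp only
    rw [hsplit]
    have h1 := hg0lb π hπ
    have h2 := hHlb π hπ
    nlinarith
  -- upper bound on the regularized inf
  have hub : ∀ ε : ℝ, 0 < ε → sInf ((fun π : Fin n → Fin K → ℝ => ∑ i, ∑ k,
      (C i k * π i k + ε * (π i k * (Real.log (π i k) - 1)))) '' U) ≤ L := by
    intro ε hε
    rw [hL]
    apply le_csInf (hUne.image g0)
    rintro _ ⟨π, hπ, rfl⟩
    calc sInf _ ≤ ∑ i, ∑ k, (C i k * π i k + ε * (π i k * (Real.log (π i k) - 1))) :=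
          csInf_le (hbdd ε hε.le) ⟨π, hπ, rfl⟩
    _ ≤ g0 π := by
        rw [hsplit]
        have := hHub π hπ
        nlinarith
  -- lower bound on the regularized inf
  have hlb : ∀ ε : ℝ, 0 < ε → L - ε * (2*(n:ℝ)*K) ≤ sInf ((fun π : Fin n → Fin K → ℝ =>
      ∑ i, ∑ k, (C i k * π i k + ε * (π i k * (Real.log (π i k) - 1)))) '' U) := by
    intro ε hε
    apply le_csInf (hUne.image _)
    rintro _ ⟨π, hπ, rfl⟩
    have h1 : L ≤ g0 π := csInf_le hbdd0 ⟨π, hπ, rfl⟩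
    simp only
    rw [hsplit]
    have h2 := hHlb π hπ
    nlinarith
  -- squeeze
  have hlow : Tendsto (fun ε : ℝ => L - ε * (2*(n:ℝ)*K)) (nhdsWithin 0 (Set.Ioi 0)) (nhds L) := by
    have h1 : Tendsto (fun ε : ℝ => L - ε * (2*(n:ℝ)*K)) (nhds 0) (nhds (L - 0 * (2*(n:ℝ)*K))) :=
      (tendsto_id.mul_const _).const_sub L
    have h2 := h1.mono_left (nhdsWithin_le_nhds (s := Set.Ioi (0:ℝ)))
    simpa using h2
  apply tendsto_of_tendsto_of_tendsto_of_le_of_le' hlow tendsto_const_nhds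
  · filter_upwards [self_mem_nhdsWithin] with ε hε
    exact hlb ε hε
  · filter_upwards [self_mem_nhdsWithin] with ε hε
    exact hub ε hε
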